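/- arXiv:2508.20365 — 2 statements merged into one kernel-verified Lean document; each statement's English description precedes it below -/
import Mathlib

section
/- Data rewriting steps induce pattern reduction steps: if ((x₁,…,xₙ), [M/x⃗]) ⟶ (t, [M′/y⃗]) for pairwise distinct variables x⃗ = (x₁,…,xₙ), then t ⇒ (y⃗), where (y⃗) is the trivial tuple pattern consisting of the variables y⃗. -/
namespace STPaper

variable {A V : Type}

/-- A word over the alphabet `A`. -/
abbrev Word (A : Type) := List A

/-- A pattern: a finite word over `A ⊕ V` (letters and variables). -/
abbrev Pat (A V : Type) := List (A ⊕ V)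

/-- A tuple pattern: a finite tuple of patterns. -/
abbrev TP (A V : Type) := List (Pat A V)

/-- A column of learning data: one word per row. -/
abbrev Col (A : Type) := List (Word A)

/-- Learning data, represented as its list of columns. -/
abbrev Data (A : Type) := List (Col A)

/-- A data-substitution `[M/x⃗]`: the number `m` of rows together with the list pairing each
variable of `x⃗` with the corresponding column of `M`. -/
structure DSub (A V : Type) where
  m : ℕ
  entries : List (V × Col A)

/-- Apply a word-valued substitution to a pattern. -/
def substPatW (θ : V → Word A) (p : Pat A V) : Word A :=
  (p.map (Sum.elim (fun a => [a]) θ)).flatten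

/-- Look up the column assigned to a variable by a data-substitution (default: all-ε). -/
def lookupCol [DecidableEq V] (E : List (V × Col A)) (x : V) : Col A :=
  match E.find? (fun e => decide (e.1 = x)) with
  | some e => e.2
  | none => []

/-- The substitution corresponding to the `i`-th row of a data-substitution. -/
def DSub.rowSub [DecidableEq V] (Θ : DSub A V) (i : ℕ) : V → Word A :=
  fun x => (lookupCol Θ.entries x).getD i []

/-- `Θ.apply t` : the matrix `Θt` (as a list of columns, each of length `Θ.m`). -/
def DSub.apply [DecidableEq V] (Θ : DSub A V) (t : TP A V) : Data A :=
  t.map (fun p => (List.range Θ.m).map (fun i => substPatW (Θ.rowSub i) p))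

/-- Well-formedness of a data-substitution: pairwise-distinct variables and
all columns of length `m`. -/
def DSub.WF (Θ : DSub A V) : Prop :=
  (Θ.entries.map Prod.fst).Nodup ∧ ∀ e ∈ Θ.entries, e.2.length = Θ.m

/-- The free variables of a tuple pattern. -/
def fvTP (t : TP A V) : Set V := {x | Sum.inr x ∈ t.flatten}

/-- Substitution of a single pattern `q` for the variable `x` in a pattern. -/
def substVar [DecidableEq A] [DecidableEq V] (x : V) (q : Pat A V) (p : Pat A V) : Pat A V :=
  (p.map (fun s => if s = Sum.inr x then q else [s])).flatten

/-- Substitution of a single pattern `q` for the variable `x` in a tuple pattern. -/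
def substVarTP [DecidableEq A] [DecidableEq V] (x : V) (q : Pat A V) (t : TP A V) : TP A V :=
  t.map (substVar x q)

/-- Simultaneous substitution `[qs/xs]p` of the patterns `qs` for the variables `xs`. -/
def substVars [DecidableEq V] (xs : List V) (qs : List (Pat A V)) (p : Pat A V) : Pat A V :=
  (p.map (fun s =>
    match s with
    | Sum.inl a => [Sum.inl a]
    | Sum.inr x =>
      match (xs.zip qs).find? (fun e => decide (e.1 = x)) with
      | some e => e.2
      | none => [Sum.inr x])).flatten

/-- Simultaneous substitution `[qs/xs]t` on a tuple pattern. -/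
def substVarsTP [DecidableEq V] (xs : List V) (qs : List (Pat A V)) (t : TP A V) : TP A V :=
  t.map (substVars xs qs)

/-- A column is the all-ε column. -/
def allEps (c : Col A) : Prop := ∀ w ∈ c, w = []

/-- The trivial tuple pattern `(x₁, …, xₙ)`. -/
def trivTP (xs : List V) : TP A V := xs.map (fun x => [Sum.inr x])

section
variable [DecidableEq A] [DecidableEq V]

/-- The rewriting relation ⟶ on pairs of a tuple pattern and a data-substitution. -/
inductive Step : (TP A V × DSub A V) → (TP A V × DSub A V) → Prop
  | pre (t : TP A V) (m : ℕ) (E : List (V × Col A)) (i j : ℕ)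
      (hi : i < E.length) (hj : j < E.length) (hij : i ≠ j)
      (s : Col A) (hslen : s.length = (E[i]'hi).2.length)
      (hpre : (E[j]'hj).2 = List.zipWith (· ++ ·) (E[i]'hi).2 s)
      (hne : ¬ allEps (E[i]'hi).2)
      (x' : V) (hx1 : x' ∉ E.map Prod.fst) (hx2 : Sum.inr x' ∉ t.flatten) :
      Step (t, ⟨m, E⟩)
        (substVarTP (E[j]'hj).1 [Sum.inr (E[i]'hi).1, Sum.inr x'] t,
         ⟨m, E.set j (x', s)⟩)
  | cpre (t : TP A V) (m : ℕ) (E : List (V × Col A)) (j : ℕ)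
      (hj : j < E.length) (a : A) (s : Col A)
      (hpre : (E[j]'hj).2 = s.map (fun w => a :: w))
      (x' : V) (hx1 : x' ∉ E.map Prod.fst) (hx2 : Sum.inr x' ∉ t.flatten) :
      Step (t, ⟨m, E⟩)
        (substVarTP (E[j]'hj).1 [Sum.inl a, Sum.inr x'] t, ⟨m, E.set j (x', s)⟩)
  | eps (t : TP A V) (m : ℕ) (E : List (V × Col A)) (j : ℕ)
      (hj : j < E.length) (heps : allEps (E[j]'hj).2) :
      Step (t, ⟨m, E⟩) (substVarTP (E[j]'hj).1 [] t, ⟨m, E.eraseIdx j⟩)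

/-- `n`-step rewriting. -/
def StepN : ℕ → (TP A V × DSub A V) → (TP A V × DSub A V) → Prop
  | 0 => fun c₁ c₂ => c₁ = c₂
  | n + 1 => fun c₁ c₃ => ∃ c₂, Step c₁ c₂ ∧ StepN n c₂ c₃

end

/-- The reduction relation ⇒ on tuple patterns. -/
inductive PStep : TP A V → TP A V → Prop
  | pre (t : TP A V) (i j : ℕ) (hi : i < t.length) (hj : j < t.length)
      (hij : i ≠ j) (p' : Pat A V)
      (hdec : t[j]'hj = (t[i]'hi) ++ p') (hne : t[i]'hi ≠ []) :
      PStep t (t.set j p')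
  | cpre (t : TP A V) (j : ℕ) (hj : j < t.length) (a : A) (p' : Pat A V)
      (hdec : t[j]'hj = Sum.inl a :: p') :
      PStep t (t.set j p')
  | eps (t : TP A V) (j : ℕ) (hj : j < t.length) (heps : t[j]'hj = []) :
      PStep t (t.eraseIdx j)

/-- A tuple pattern is solvable if it reduces to a trivial tuple of pairwise
distinct variables. -/
def Solvable (t : TP A V) : Prop :=
  ∃ ys : List V, ys.Nodup ∧ Relation.ReflTransGen PStep t (trivTP ys)

/-- The language of a tuple pattern. -/
def lang (t : TP A V) : Set (List (Word A)) :=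
  {w | ∃ θ : V → Word A, w = t.map (substPatW θ)}

/-- `M ⊨ t` : there is a data-substitution `Θ` (with `rows` rows) with `Θt = M`. -/
def Models [DecidableEq V] (M : Data A) (rows : ℕ) (t : TP A V) : Prop :=
  ∃ Θ : DSub A V, Θ.m = rows ∧ Θ.WF ∧ Θ.apply t = M

/-- `M ⊨ₛ t` : additionally, no variable of `t` is mapped to ε in every row. -/
def SModels [DecidableEq V] (M : Data A) (rows : ℕ) (t : TP A V) : Prop :=
  ∃ Θ : DSub A V, Θ.m = rows ∧ Θ.WF ∧ Θ.apply t = M ∧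
    ∀ x ∈ fvTP t, ¬ allEps (lookupCol Θ.entries x)

/-- Renaming the variables of a tuple pattern. -/
def renameTP (ρ : V → V) (t : TP A V) : TP A V :=
  t.map (List.map (Sum.map id ρ))

/-- The measure `#t` of a tuple pattern. -/
def tpMeasure (t : TP A V) : ℕ := (t.map List.length).sum + t.length

/-- `size(M)`. -/
def dataSize (M : Data A) : ℕ :=
  (M.map (fun c => (c.map (fun w => w.length + 1)).sum)).sum

/-- Learning data (as columns) whose rows enumerate the given list of tuples. -/
def colsOfRows (n : ℕ) (rows : List (List (Word A))) : Data A :=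
  (List.range n).map (fun j => rows.map (fun r => r.getD j []))

/-- `m ⊨ₛ t` for a (possibly infinite) set of tuples of words. -/
def SetSModels (S : Set (List (Word A))) (t : TP A V) : Prop :=
  ∃ θ : S → V → Word A,
    (∀ v : S, (v : List (Word A)) = t.map (substPatW (θ v))) ∧
    ∀ x ∈ fvTP t, ∃ v : S, θ v x ≠ []

/-- A rule instance of the ⇒ relation. -/
inductive RuleInst (A V : Type) where
  | pre (i j : ℕ)
  | cpre (j : ℕ) (a : A)
  | eps (j : ℕ)

/-- The reduction step derived by a given rule instance. -/
def RuleStep : RuleInst A V → TP A V → TP A V → Prop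
  | .pre i j, t, t' => ∃ (hi : i < t.length) (hj : j < t.length),
      i ≠ j ∧ t[i]'hi ≠ [] ∧ ∃ p', t[j]'hj = (t[i]'hi) ++ p' ∧ t' = t.set j p'
  | .cpre j a, t, t' => ∃ (_ : j < t.length) (p' : Pat A V),
      t.getD j [] = Sum.inl a :: p' ∧ t' = t.set j p'
  | .eps j, t, t' => ∃ (_ : j < t.length), t.getD j [] = ([] : Pat A V) ∧ t' = t.eraseIdx j

/-- Well-definedness of the residual of a tuple pattern along a rule instance. -/
def ResDefined : RuleInst A V → TP A V → Prop
  | .pre i j, t => i < t.length ∧ j < t.length ∧ (t.getD i []) <+: (t.getD j [])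
  | .cpre j a, t => j < t.length ∧ ∃ p', t.getD j [] = Sum.inl a :: p'
  | .eps j, t => j < t.length ∧ t.getD j [] = ([] : Pat A V)

/-- The residual of a tuple pattern along a rule instance. -/
def residual : RuleInst A V → TP A V → TP A V
  | .pre i j, t => t.set j ((t.getD j []).drop (t.getD i []).length)
  | .cpre j _, t => t.set j ((t.getD j []).drop 1)
  | .eps j, t => t.eraseIdx j

/-- The reduction relation ⇒ extended with the postfix rules. -/
inductive PStepX : TP A V → TP A V → Prop
  | pre (t : TP A V) (i j : ℕ) (hi : i < t.length) (hj : j < t.length)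
      (hij : i ≠ j) (p' : Pat A V)
      (hdec : t[j]'hj = (t[i]'hi) ++ p') (hne : t[i]'hi ≠ []) :
      PStepX t (t.set j p')
  | cpre (t : TP A V) (j : ℕ) (hj : j < t.length) (a : A) (p' : Pat A V)
      (hdec : t[j]'hj = Sum.inl a :: p') :
      PStepX t (t.set j p')
  | eps (t : TP A V) (j : ℕ) (hj : j < t.length) (heps : t[j]'hj = []) :
      PStepX t (t.eraseIdx j)
  | post (t : TP A V) (i j : ℕ) (hi : i < t.length) (hj : j < t.length)
      (hij : i ≠ j) (p' : Pat A V)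
      (hdec : t[j]'hj = p' ++ (t[i]'hi)) (hne : t[i]'hi ≠ []) :
      PStepX t (t.set j p')
  | cpost (t : TP A V) (j : ℕ) (hj : j < t.length) (a : A) (p' : Pat A V)
      (hdec : t[j]'hj = p' ++ [Sum.inl a]) :
      PStepX t (t.set j p')

theorem eraseIdx_set_same {α : Type _} (l : List α) (j : ℕ) (a : α) :
    (l.set j a).eraseIdx j = l.eraseIdx j := by
  induction l generalizing j with
  | nil => simp
  | cons b l ih =>
    cases j with
    | zero => simp
    | succ j => simp [List.eraseIdx_cons_succ, ih]

theorem map_eraseIdx' {α β : Type _} (f : α → β) (l : List α) (j : ℕ) :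
    (l.eraseIdx j).map f = (l.map f).eraseIdx j := by
  induction l generalizing j with
  | nil => simp
  | cons b l ih =>
    cases j with
    | zero => simp
    | succ j => simp [List.eraseIdx_cons_succ, ih]

theorem subst_triv [DecidableEq A] [DecidableEq V] (xs : List V) (hxs : xs.Nodup)
    (j : ℕ) (hj : j < xs.length) (q : Pat A V) :
    substVarTP (xs[j]'hj) q (trivTP xs) = (trivTP xs).set j q := by
  apply List.ext_getElem
  · simp [substVarTP, trivTP]
  · intro k h1 h2
    have hk : k < xs.length := by simpa [substVarTP, trivTP] using h1
    simp only [substVarTP, trivTP, List.getElem_map, List.getElem_set, List.length_map]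
    by_cases hkj : k = j
    · subst hkj
      simp [substVar]
    · have hne : xs[k]'hk ≠ xs[j]'hj := by
        intro he
        exact hkj ((hxs.getElem_inj_iff).mp he)
      have : j ≠ k := fun h => hkj h.symm
      simp [substVar, hne, this]

/-- **Data rewriting steps induce pattern reduction steps.**
If `((x₁,…,xₙ), [M/x⃗]) ⟶ (t, [M′/y⃗])` for pairwise distinct variables `x⃗`, then
`t ⇒ (y⃗)`, where `(y⃗)` is the trivial tuple pattern of the variables `y⃗` of the
resulting data-substitution. -/
theorem step_implies_pstep
    [DecidableEq A] [DecidableEq V] [Nontrivial A] [Countable V] [Infinite V]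
    (xs : List V) (hxs : xs.Nodup) (M : Data A) (m : ℕ)
    (hMn : M.length = xs.length) (hcols : ∀ c ∈ M, c.length = m)
    (t : TP A V) (Θ' : DSub A V)
    (h : Step (trivTP xs, ⟨m, xs.zip M⟩) (t, Θ')) :
    PStep t (trivTP (Θ'.entries.map Prod.fst)) := by
  have hlz : (xs.zip M).length = xs.length := by simp [List.length_zip, hMn]
  have hfst : (xs.zip M).map Prod.fst = xs := List.map_fst_zip (le_of_eq hMn.symm)
  cases h with
  | pre _ _ _ i j hi hj hij s hslen hpre hne x' hx1 hx2 =>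
    have hj' : j < xs.length := hlz ▸ hj
    have hi' : i < xs.length := hlz ▸ hi
    have efst_j : ((xs.zip M)[j]'hj).1 = xs[j]'hj' := by rw [List.getElem_zip]
    have efst_i : ((xs.zip M)[i]'hi).1 = xs[i]'hi' := by rw [List.getElem_zip]
    rw [efst_j, efst_i, subst_triv xs hxs j hj']
    have hmap : (((xs.zip M).set j (x', s)).map Prod.fst) = xs.set j x' := by
      rw [List.map_set, hfst]
    rw [hmap]
    have htr : trivTP (A := A) (xs.set j x')
        = ((trivTP xs).set j ([Sum.inr (xs[i]'hi'), Sum.inr x'] : Pat A V)).set j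
            [Sum.inr x'] := by
      simp [trivTP, List.map_set, List.set_set]
    rw [htr]
    have hli : i < (((trivTP (A := A) xs).set j
        ([Sum.inr (xs[i]'hi'), Sum.inr x'] : Pat A V))).length := by
      simp [trivTP]; omega
    have hlj : j < (((trivTP (A := A) xs).set j
        ([Sum.inr (xs[i]'hi'), Sum.inr x'] : Pat A V))).length := by
      simp [trivTP]; omega
    refine PStep.pre _ i j hli hlj hij [Sum.inr x'] ?_ ?_
    · rw [List.getElem_set_ne (Ne.symm hij)]
      simp [trivTP]
    · rw [List.getElem_set_ne (Ne.symm hij)]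
      simp [trivTP]
  | cpre _ _ _ j hj a s hpre x' hx1 hx2 =>
    have hj' : j < xs.length := hlz ▸ hj
    have efst_j : ((xs.zip M)[j]'hj).1 = xs[j]'hj' := by rw [List.getElem_zip]
    rw [efst_j, subst_triv xs hxs j hj']
    have hmap : (((xs.zip M).set j (x', s)).map Prod.fst) = xs.set j x' := by
      rw [List.map_set, hfst]
    rw [hmap]
    have htr : trivTP (A := A) (xs.set j x')
        = ((trivTP xs).set j ([Sum.inl a, Sum.inr x'] : Pat A V)).set j
            [Sum.inr x'] := by
      simp [trivTP, List.map_set, List.set_set]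
    rw [htr]
    have hlj : j < (((trivTP (A := A) xs).set j
        ([Sum.inl a, Sum.inr x'] : Pat A V))).length := by
      simp [trivTP]; omega
    refine PStep.cpre _ j hlj a [Sum.inr x'] ?_
    simp
  | eps _ _ _ j hj heps =>
    have hj' : j < xs.length := hlz ▸ hj
    have efst_j : ((xs.zip M)[j]'hj).1 = xs[j]'hj' := by rw [List.getElem_zip]
    rw [efst_j, subst_triv xs hxs j hj']
    have hmap : (((xs.zip M).eraseIdx j).map Prod.fst) = xs.eraseIdx j := by
      rw [map_eraseIdx', hfst]
    rw [hmap]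
    have htr : trivTP (A := A) (xs.eraseIdx j)
        = ((trivTP xs).set j ([] : Pat A V)).eraseIdx j := by
      rw [eraseIdx_set_same]
      simp [trivTP, map_eraseIdx']
    rw [htr]
    have hlj : j < (((trivTP (A := A) xs).set j ([] : Pat A V))).length := by
      simp [trivTP]; omega
    exact PStep.eps _ j hlj (by simp)

end STPaper
end

section
/- Base case of minimality: let x⃗ = (x₁,…,xₙ) be pairwise distinct variables and M learning data with n columns such that the pair ((x₁,…,xₙ), [M/x⃗]) admits no ⟶ step. If M ⊨ t for a solvable tuple pattern t of arity n, then t is a tuple (y₁,…,yₙ) of pairwise distinct variables. -/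
namespace STPaper

variable {A V : Type}

theorem substPatW_append (θ : V → Word A) (p q : Pat A V) :
    substPatW θ (p ++ q) = substPatW θ p ++ substPatW θ q := by
  simp [substPatW]

theorem substPatW_cons_inl (θ : V → Word A) (a : A) (p : Pat A V) :
    substPatW θ (Sum.inl a :: p) = a :: substPatW θ p := by
  simp [substPatW]

theorem substPatW_nil (θ : V → Word A) : substPatW θ ([] : Pat A V) = [] := by
  simp [substPatW]

/-- **Base case of minimality.**
If the initial pair `((x₁,…,xₙ), [M/x⃗])` admits no rewriting step and `M ⊨ t` for a
solvable tuple pattern `t` of arity `n`, then `t` is a tuple of pairwise distinct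
variables. -/
theorem minimality_base
    [DecidableEq A] [DecidableEq V] [Nontrivial A] [Countable V] [Infinite V]
    (xs : List V) (hxs : xs.Nodup) (M : Data A) (m : ℕ)
    (hMn : M.length = xs.length) (hcols : ∀ c ∈ M, c.length = m)
    (hstuck : ¬ ∃ c, Step (trivTP xs, ⟨m, xs.zip M⟩) c)
    (t : TP A V) (hsolv : Solvable t) (hM : Models M m t) :
    ∃ ys : List V, ys.Nodup ∧ t = trivTP ys := by
  obtain ⟨ys, hnd, hred⟩ := hsolv
  rcases hred.cases_head with heq | ⟨t₁, hstep, _⟩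
  · exact ⟨ys, hnd, heq⟩
  exfalso
  obtain ⟨Θ, hm, hwf, happ⟩ := hM
  have htlen : t.length = M.length := by rw [← happ]; simp [DSub.apply]
  have hElen : (xs.zip M).length = xs.length := by
    simp [List.length_zip, hMn]
  have hMget : ∀ (j : ℕ) (hj : j < t.length),
      M[j]'(htlen ▸ hj) = (List.range Θ.m).map
        (fun i => substPatW (Θ.rowSub i) (t[j]'hj)) := by
    intro j hj
    simp only [← happ, DSub.apply, List.getElem_map]
  obtain ⟨x', hx'⟩ := Infinite.exists_notMem_finset xs.toFinset
  rw [List.mem_toFinset] at hx'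
  have hx1 : x' ∉ (xs.zip M).map Prod.fst := by
    rw [List.map_fst_zip (le_of_eq hMn.symm)]; exact hx'
  have hx2 : Sum.inr x' ∉ (trivTP xs : TP A V).flatten := by
    simpa [trivTP] using hx'
  apply hstuck
  cases hstep with
  | eps j hj heps =>
      have hj' : j < (xs.zip M).length := by omega
      have heps' : allEps ((xs.zip M)[j]'hj').2 := by
        rw [List.getElem_zip]
        intro w hw
        rw [hMget j hj, heps] at hw
        simp [substPatW_nil] at hw
        exact hw.2
      exact ⟨_, Step.eps (trivTP xs) m (xs.zip M) j hj' heps'⟩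
  | cpre j hj a p' hdec =>
      have hj' : j < (xs.zip M).length := by omega
      have hpre' : ((xs.zip M)[j]'hj').2 =
          ((List.range Θ.m).map (fun i => substPatW (Θ.rowSub i) p')).map
            (fun w => a :: w) := by
        rw [List.getElem_zip]
        rw [hMget j hj, hdec]
        simp [substPatW_cons_inl]
      exact ⟨_, Step.cpre (trivTP xs) m (xs.zip M) j hj' a _ hpre' x' hx1 hx2⟩
  | pre i j hi hj hij p' hdec hne =>
      have hi' : i < (xs.zip M).length := by omega
      have hj' : j < (xs.zip M).length := by omega
      by_cases hce : allEps ((xs.zip M)[i]'hi').2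
      · exact ⟨_, Step.eps (trivTP xs) m (xs.zip M) i hi' hce⟩
      · have hslen : ((List.range Θ.m).map
            (fun k => substPatW (Θ.rowSub k) p')).length
            = ((xs.zip M)[i]'hi').2.length := by
          rw [List.getElem_zip]
          simp [hMget i hi]
        have hpre' : ((xs.zip M)[j]'hj').2 =
            List.zipWith (· ++ ·) ((xs.zip M)[i]'hi').2
              ((List.range Θ.m).map (fun k => substPatW (Θ.rowSub k) p')) := by
          rw [List.getElem_zip, List.getElem_zip]
          rw [hMget j hj, hMget i hi, hdec]
          rw [List.zipWith_map, List.zipWith_self]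
          simp [substPatW_append]
        exact ⟨_, Step.pre (trivTP xs) m (xs.zip M) i j hi' hj' hij _
          hslen hpre' hce x' hx1 hx2⟩

end STPaper
end
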